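/- arXiv:1903.05639 — 2 statements merged into one kernel-verified Lean document; each statement's English description precedes it below -/
import Mathlib

section
/- Let μ : [0,∞) → ℝ be a non-negative, non-decreasing, right-continuous function with μ(0) = 0 and let α ≥ 0. Assume that the Laplace transform μ̂(t) = ∫₀^∞ e^{−tλ} dμ(λ) is finite for every t > 0 and that t^α μ̂(t) → 1 as t → 0⁺. Then μ(λ) λ^{−α} → 1/Γ(α+1) as λ → ∞. -/
/-!
Put `m_t := t^α • (x ↦ t x)_* μ` (`scaledMeasure μ α t`), so that
`∫ f dm_t = t^α ∫ f(tx) dμ(x)` and `m_t (-∞, 1] = t^α μ(1/t)`. The hypothesis says that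
`∫ e^{-sx} dm_t → s^{-α}` for every `s > 0`, and `s^{-α}` is the Laplace transform of
`ν = x^{α-1}/Γ(α) dx` on `(0, ∞)` (of `δ₀` if `α = 0`; this is `karamataMeasure α`).
By Weierstrass on `[0, 1]` in the variable `u = e^{-x}`, every `e^{-x} q(e^{-x})` with `q`
continuous is approximated, up to `ε e^{-x}`, by combinations of the `e^{-(k+1)x}`; hence
`∫ g dm_t → ∫ g dν` for such `g`, in particular for piecewise linear cutoffs of half-lines.
Squeezing the indicator of `(-∞, 1]` between two cutoffs, and using that `ν (-∞, c] = c^α/Γ(α+1)`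
is continuous in `c`, gives `t^α μ(1/t) → 1/Γ(α+1)`.
-/

open MeasureTheory Filter Set Topology Real

namespace Karamata

noncomputable def cutoff (a b x : ℝ) : ℝ := min 1 (max 0 ((b - x) / (b - a)))

section Cutoff

variable {a b : ℝ}

lemma continuous_cutoff (a b : ℝ) : Continuous (cutoff a b) := by
  unfold cutoff; fun_prop

lemma cutoff_nonneg (a b x : ℝ) : 0 ≤ cutoff a b x := le_min zero_le_one (le_max_left _ _)

lemma cutoff_le_one (a b x : ℝ) : cutoff a b x ≤ 1 := min_le_left _ _

lemma cutoff_of_le_left (hab : a < b) {x : ℝ} (hx : x ≤ a) : cutoff a b x = 1 :=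
  min_eq_left (le_max_of_le_right ((one_le_div (by linarith)).2 (by linarith)))

lemma cutoff_of_right_le (hab : a < b) {x : ℝ} (hx : b ≤ x) : cutoff a b x = 0 := by
  rw [cutoff, max_eq_left (div_nonpos_of_nonpos_of_nonneg (by linarith) (by linarith)),
    min_eq_right zero_le_one]

lemma indicator_Iic_le_cutoff (hab : a < b) (x : ℝ) : (Iic a).indicator 1 x ≤ cutoff a b x := by
  by_cases hx : x ∈ Iic a
  · rw [indicator_of_mem hx, cutoff_of_le_left hab hx, Pi.one_apply]
  · rw [indicator_of_notMem hx]
    exact cutoff_nonneg a b x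

lemma cutoff_le_indicator_Iic (hab : a < b) (x : ℝ) : cutoff a b x ≤ (Iic b).indicator 1 x := by
  by_cases hx : x ∈ Iic b
  · rw [indicator_of_mem hx, Pi.one_apply]
    exact cutoff_le_one a b x
  · rw [indicator_of_notMem hx, cutoff_of_right_le hab (not_le.1 hx).le]

variable {m : Measure ℝ}

lemma integrable_indicator_one_Iic (hb : m (Iic b) ≠ ⊤) :
    Integrable ((Iic b).indicator (1 : ℝ → ℝ)) m :=
  (integrable_indicator_iff measurableSet_Iic).2 (integrableOn_const hb)

lemma integrable_cutoff (hab : a < b) (hb : m (Iic b) ≠ ⊤) : Integrable (cutoff a b) m :=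
  (integrable_indicator_one_Iic hb).mono'
    (continuous_cutoff a b).aestronglyMeasurable (.of_forall fun x => by
      rw [norm_of_nonneg (cutoff_nonneg a b x)]; exact cutoff_le_indicator_Iic hab x)

lemma measureReal_Iic_le_integral_cutoff (hab : a < b) (hb : m (Iic b) ≠ ⊤) :
    m.real (Iic a) ≤ ∫ x, cutoff a b x ∂m := by
  rw [← integral_indicator_one measurableSet_Iic]
  have ha : m (Iic a) ≠ ⊤ := ne_top_of_le_ne_top hb (measure_mono (Iic_subset_Iic.2 hab.le))
  exact integral_mono (integrable_indicator_one_Iic ha) (integrable_cutoff hab hb)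
    (indicator_Iic_le_cutoff hab)

lemma integral_cutoff_le_measureReal_Iic (hab : a < b) (hb : m (Iic b) ≠ ⊤) :
    ∫ x, cutoff a b x ∂m ≤ m.real (Iic b) := by
  rw [← integral_indicator_one measurableSet_Iic]
  exact integral_mono (integrable_cutoff hab hb) (integrable_indicator_one_Iic hb)
    (cutoff_le_indicator_Iic hab)

end Cutoff

section ExpMoments

variable {m : Measure ℝ}

lemma measure_Iic_ne_top_of_integrable_exp_neg (hexp : Integrable (fun x => exp (-x)) m)
    (c : ℝ) : m (Iic c) ≠ ⊤ := by
  refine ne_top_of_le_ne_top (hexp.measure_norm_ge_lt_top (exp_pos (-c))).ne (measure_mono ?_)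
  intro x hx
  simpa [norm_of_nonneg (exp_pos _).le] using hx

lemma integrable_exp_neg_mul_comp (hm : ∀ᵐ x ∂m, 0 ≤ x)
    (hexp : Integrable (fun x => exp (-x)) m) {q : ℝ → ℝ} (hq : Continuous q) :
    Integrable (fun x => exp (-x) * q (exp (-x))) m := by
  obtain ⟨C, hC⟩ := isCompact_Icc.exists_bound_of_continuousOn (hq.continuousOn (s := Icc 0 1))
  refine (hexp.mul_const C).mono' (by fun_prop) ?_
  filter_upwards [hm] with x hx
  rw [norm_mul, norm_of_nonneg (exp_pos _).le]
  exact mul_le_mul_of_nonneg_left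
    (hC _ ⟨(exp_pos _).le, exp_le_one_iff.2 (by linarith)⟩) (exp_pos _).le

lemma abs_integral_exp_neg_mul_comp_sub_le (hm : ∀ᵐ x ∂m, 0 ≤ x)
    (hexp : Integrable (fun x => exp (-x)) m) {q₁ q₂ : ℝ → ℝ} (hq₁ : Continuous q₁)
    (hq₂ : Continuous q₂) {ε : ℝ} (hε : ∀ u ∈ Icc (0 : ℝ) 1, |q₁ u - q₂ u| ≤ ε) :
    |∫ x, exp (-x) * q₁ (exp (-x)) ∂m - ∫ x, exp (-x) * q₂ (exp (-x)) ∂m|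
      ≤ ε * ∫ x, exp (-x) ∂m := by
  rw [← integral_sub (integrable_exp_neg_mul_comp hm hexp hq₁)
    (integrable_exp_neg_mul_comp hm hexp hq₂), ← integral_const_mul ε, ← Real.norm_eq_abs]
  refine norm_integral_le_of_norm_le (hexp.const_mul ε) ?_
  filter_upwards [hm] with x hx
  rw [← mul_sub, norm_mul, norm_of_nonneg (exp_pos _).le, mul_comm]
  exact mul_le_mul_of_nonneg_right
    (hε _ ⟨(exp_pos _).le, exp_le_one_iff.2 (by linarith)⟩) (exp_pos _).le

end ExpMoments

lemma continuous_comp_neg_log_div {g : ℝ → ℝ} (hg : Continuous g) {b : ℝ}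
    (hb : ∀ x, b ≤ x → g x = 0) : Continuous fun u => g (-log u) / u := by
  refine continuous_iff_continuousAt.2 fun u => ?_
  rcases eq_or_ne u 0 with rfl | hu
  · -- near `0` the function vanishes, since `log v = log |v|` and `x / 0 = 0`
    refine (continuousAt_const (y := (0 : ℝ))).congr ?_
    filter_upwards [Metric.ball_mem_nhds (0 : ℝ) (exp_pos (-b))] with v hv
    rcases eq_or_ne v 0 with rfl | hv0
    · simp
    · rw [mem_ball_zero_iff, norm_eq_abs] at hv
      have : log v < -b := by
        rw [← log_abs, ← log_exp (-b)]
        exact log_lt_log (abs_pos.2 hv0) hv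
      simp [hb (-log v) (by linarith)]
  · exact (hg.continuousAt.comp (continuousAt_log hu).neg).div continuousAt_id hu

section Convergence

variable {ι : Type*} {l : Filter ι} {m : ι → Measure ℝ} {ν : Measure ℝ}
  (hm : ∀ᶠ i in l, ∀ᵐ x ∂m i, 0 ≤ x) (hmexp : ∀ᶠ i in l, Integrable (fun x => exp (-x)) (m i))
  (hν : ∀ᵐ x ∂ν, 0 ≤ x) (hνexp : Integrable (fun x => exp (-x)) ν)
  (hlim : ∀ k : ℕ, Tendsto (fun i => ∫ x, exp (-(k + 1) * x) ∂m i) l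
    (𝓝 (∫ x, exp (-(k + 1) * x) ∂ν)))
include hm hmexp hν hνexp hlim

lemma tendsto_integral_exp_neg_mul_eval (p : Polynomial ℝ) :
    Tendsto (fun i => ∫ x, exp (-x) * p.eval (exp (-x)) ∂m i) l
      (𝓝 (∫ x, exp (-x) * p.eval (exp (-x)) ∂ν)) := by
  induction p using Polynomial.induction_on' with
  | add p q hp hq =>
    simp only [Polynomial.eval_add, mul_add]
    rw [integral_add (integrable_exp_neg_mul_comp hν hνexp p.continuous)
      (integrable_exp_neg_mul_comp hν hνexp q.continuous)]
    refine (hp.add hq).congr' ?_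
    filter_upwards [hm, hmexp] with i hi hi'
    rw [integral_add (integrable_exp_neg_mul_comp hi hi' p.continuous)
      (integrable_exp_neg_mul_comp hi hi' q.continuous)]
  | monomial k c =>
    have hmon : ∀ x, exp (-x) * (Polynomial.monomial k c).eval (exp (-x))
        = c * exp (-(k + 1) * x) := fun x => by
      rw [Polynomial.eval_monomial, ← exp_nat_mul, mul_left_comm, ← exp_add]
      ring_nf
    simp_rw [hmon, integral_const_mul]
    exact (hlim k).const_mul c

theorem tendsto_integral_exp_neg_mul_comp {q : ℝ → ℝ} (hq : Continuous q) :
    Tendsto (fun i => ∫ x, exp (-x) * q (exp (-x)) ∂m i) l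
      (𝓝 (∫ x, exp (-x) * q (exp (-x)) ∂ν)) := by
  set M := ∫ x, exp (-x) ∂ν + 1
  have hM : 0 < M := by positivity
  have hmM : ∀ᶠ i in l, ∫ x, exp (-x) ∂m i < M := by
    have h0 := hlim 0
    simp only [Nat.cast_zero, zero_add, neg_mul, one_mul] at h0
    exact h0.eventually_lt_const (lt_add_one _)
  rw [Metric.tendsto_nhds]
  intro ε hε
  set δ := ε / (4 * M)
  have hδ : 0 < δ := by positivity
  obtain ⟨p, hp⟩ := exists_polynomial_near_of_continuousOn 0 1 q hq.continuousOn δ hδ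
  have hqp : ∀ u ∈ Icc (0 : ℝ) 1, |q u - p.eval u| ≤ δ := fun u hu =>
    (abs_sub_comm (p.eval u) (q u) ▸ hp u hu).le
  have hν_approx := abs_integral_exp_neg_mul_comp_sub_le hν hνexp hq p.continuous hqp
  filter_upwards [hm, hmexp, hmM, Metric.tendsto_nhds.1
    (tendsto_integral_exp_neg_mul_eval hm hmexp hν hνexp hlim p) (ε / 2) (half_pos hε)]
    with i hi hi' hiM hip
  have hm_approx := abs_integral_exp_neg_mul_comp_sub_le hi hi' hq p.continuous hqp
  have hδM : δ * M = ε / 4 := by simp only [δ]; field_simp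
  have h1 : δ * ∫ x, exp (-x) ∂m i ≤ ε / 4 := hδM ▸ by gcongr
  have h2 : δ * ∫ x, exp (-x) ∂ν ≤ ε / 4 := hδM ▸ by gcongr; linarith
  rw [Real.dist_eq] at hip ⊢
  have hpoly := abs_sub_lt_iff.1 hip
  have hm_le := abs_le.1 hm_approx
  have hν_le := abs_le.1 hν_approx
  rw [abs_sub_lt_iff]
  constructor <;> linarith

lemma tendsto_integral_cutoff {a b : ℝ} (hab : a < b) :
    Tendsto (fun i => ∫ x, cutoff a b x ∂m i) l (𝓝 (∫ x, cutoff a b x ∂ν)) := by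
  have hrepr : cutoff a b = fun x => exp (-x) * (cutoff a b (-log (exp (-x))) / exp (-x)) :=
    funext fun x => by rw [log_exp, neg_neg, mul_div_cancel₀ _ (exp_ne_zero _)]
  rw [hrepr]
  exact tendsto_integral_exp_neg_mul_comp hm hmexp hν hνexp hlim
    (continuous_comp_neg_log_div (continuous_cutoff a b) fun _ => cutoff_of_right_le hab)

end Convergence

section DistributionFunction

variable {ι : Type*} {l : Filter ι} {m : ι → Measure ℝ} {ν : Measure ℝ}

theorem tendsto_measureReal_Iic (hm : ∀ᶠ i in l, ∀ c, m i (Iic c) ≠ ⊤) (hν : ∀ c, ν (Iic c) ≠ ⊤)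
    (hcutoff : ∀ a b, a < b →
      Tendsto (fun i => ∫ x, cutoff a b x ∂m i) l (𝓝 (∫ x, cutoff a b x ∂ν)))
    {c : ℝ} (hc : ContinuousAt (fun y => ν.real (Iic y)) c) :
    Tendsto (fun i => (m i).real (Iic c)) l (𝓝 (ν.real (Iic c))) := by
  refine tendsto_order.2 ⟨fun y hy => ?_, fun y hy => ?_⟩
  · obtain ⟨a, hya, hac⟩ : ∃ a, y < ν.real (Iic a) ∧ a < c :=
      (((hc.tendsto.mono_left (nhdsWithin_le_nhds (s := Iio c))).eventually (lt_mem_nhds hy)).and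
        self_mem_nhdsWithin).exists
    have hν_lt := hya.trans_le (measureReal_Iic_le_integral_cutoff hac (hν c))
    filter_upwards [(hcutoff a c hac).eventually (lt_mem_nhds hν_lt), hm] with i hi hmi
    exact hi.trans_le (integral_cutoff_le_measureReal_Iic hac (hmi c))
  · obtain ⟨b, hyb, hcb⟩ : ∃ b, ν.real (Iic b) < y ∧ c < b :=
      (((hc.tendsto.mono_left (nhdsWithin_le_nhds (s := Ioi c))).eventually (gt_mem_nhds hy)).and
        self_mem_nhdsWithin).exists
    have hν_lt := (integral_cutoff_le_measureReal_Iic hcb (hν b)).trans_lt hyb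
    filter_upwards [(hcutoff c b hcb).eventually (gt_mem_nhds hν_lt), hm] with i hi hmi
    exact (measureReal_Iic_le_integral_cutoff hcb (hmi b)).trans_lt hi

end DistributionFunction

noncomputable def karamataMeasure (α : ℝ) : Measure ℝ :=
  if α = 0 then Measure.dirac 0
  else (volume.restrict (Ioi 0)).withDensity fun x => ENNReal.ofReal (x ^ (α - 1) / Gamma α)

lemma ae_nonneg_karamataMeasure (α : ℝ) : ∀ᵐ x ∂karamataMeasure α, 0 ≤ x := by
  rcases eq_or_ne α 0 with rfl | hα
  · rw [karamataMeasure, if_pos rfl, ae_dirac_iff measurableSet_Ici]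
  · rw [karamataMeasure, if_neg hα]
    filter_upwards [(withDensity_absolutelyContinuous _ _).ae_le
      (ae_restrict_mem measurableSet_Ioi)] with x hx using le_of_lt hx

lemma integral_karamataMeasure_of_pos {α : ℝ} (hα : 0 < α) (f : ℝ → ℝ) :
    ∫ x, f x ∂karamataMeasure α = ∫ x in Ioi 0, x ^ (α - 1) / Gamma α * f x := by
  rw [karamataMeasure, if_neg hα.ne', integral_withDensity_eq_integral_toReal_smul₀
    (by fun_prop) (.of_forall fun _ => ENNReal.ofReal_lt_top)]
  refine setIntegral_congr_fun measurableSet_Ioi fun x hx => ?_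
  rw [ENNReal.toReal_ofReal (div_nonneg (rpow_nonneg (le_of_lt hx) _) (Gamma_pos_of_pos hα).le),
    smul_eq_mul]

lemma integral_exp_neg_mul_karamataMeasure {α : ℝ} (hα : 0 ≤ α) {s : ℝ} (hs : 0 < s) :
    ∫ x, exp (-s * x) ∂karamataMeasure α = s ^ (-α) := by
  rcases hα.eq_or_lt with rfl | hα
  · simp [karamataMeasure]
  · simp_rw [integral_karamataMeasure_of_pos hα, div_mul_eq_mul_div, integral_div, neg_mul,
      integral_rpow_mul_exp_neg_mul_Ioi hα hs, one_div, inv_rpow hs.le, rpow_neg hs.le]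
    field_simp

lemma integrable_exp_neg_mul_karamataMeasure {α : ℝ} (hα : 0 ≤ α) {s : ℝ} (hs : 0 < s) :
    Integrable (fun x => exp (-s * x)) (karamataMeasure α) :=
  .of_integral_ne_zero <| by
    rw [integral_exp_neg_mul_karamataMeasure hα hs]; exact (rpow_pos_of_pos hs _).ne'

lemma measureReal_Iic_karamataMeasure {α : ℝ} (hα : 0 ≤ α) {c : ℝ} (hc : 0 < c) :
    (karamataMeasure α).real (Iic c) = c ^ α / Gamma (α + 1) := by
  rcases hα.eq_or_lt with rfl | hα
  · simp [karamataMeasure, measureReal_def, Measure.dirac_apply_of_mem (mem_Iic.2 hc.le)]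
  · have hind : ∀ x, x ^ (α - 1) / Gamma α * (Iic c).indicator 1 x
        = (Iic c).indicator (fun x => x ^ (α - 1) / Gamma α) x := fun x => by
      by_cases hx : x ∈ Iic c <;> simp [hx]
    rw [← integral_indicator_one measurableSet_Iic, integral_karamataMeasure_of_pos hα]
    simp_rw [hind]
    rw [setIntegral_indicator measurableSet_Iic, Ioi_inter_Iic, integral_div,
      ← intervalIntegral.integral_of_le hc.le, integral_rpow (.inl (by linarith)),
      sub_add_cancel, zero_rpow hα.ne', sub_zero, Gamma_add_one hα.ne', div_div]

lemma continuousAt_measureReal_Iic_karamataMeasure {α : ℝ} (hα : 0 ≤ α) {c : ℝ} (hc : 0 < c) :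
    ContinuousAt (fun y => (karamataMeasure α).real (Iic y)) c := by
  refine ((continuousAt_id.rpow_const (p := α) (.inl hc.ne')).div_const (Gamma (α + 1))).congr ?_
  filter_upwards [lt_mem_nhds hc] with y hy
  rw [measureReal_Iic_karamataMeasure hα hy, id]

noncomputable def scaledMeasure (μ : Measure ℝ) (α t : ℝ) : Measure ℝ :=
  ENNReal.ofReal (t ^ α) • μ.map (t * ·)

section ScaledMeasure

variable {μ : Measure ℝ} {α t : ℝ}

lemma integral_scaledMeasure (ht : 0 < t) (f : ℝ → ℝ) :
    ∫ x, f x ∂scaledMeasure μ α t = t ^ α * ∫ x, f (t * x) ∂μ := by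
  rw [scaledMeasure, integral_smul_measure, (measurableEmbedding_mulLeft₀ ht.ne').integral_map,
    ENNReal.toReal_ofReal (rpow_nonneg ht.le _), smul_eq_mul]

lemma integrable_scaledMeasure_iff (ht : 0 < t) {f : ℝ → ℝ} :
    Integrable f (scaledMeasure μ α t) ↔ Integrable (fun x => f (t * x)) μ := by
  rw [scaledMeasure, integrable_smul_measure (by simpa using rpow_pos_of_pos ht α)
    ENNReal.ofReal_ne_top, (measurableEmbedding_mulLeft₀ ht.ne').integrable_map_iff]
  rfl

lemma ae_nonneg_scaledMeasure (hμ : ∀ᵐ x ∂μ, 0 ≤ x) (ht : 0 < t) :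
    ∀ᵐ x ∂scaledMeasure μ α t, 0 ≤ x := by
  refine Measure.ae_smul_measure ?_ _
  rw [(measurableEmbedding_mulLeft₀ ht.ne').ae_map_iff]
  filter_upwards [hμ] with x hx using mul_nonneg ht.le hx

lemma measureReal_Iic_scaledMeasure (ht : 0 < t) (c : ℝ) :
    (scaledMeasure μ α t).real (Iic c) = t ^ α * μ.real (Iic (c / t)) := by
  have hpre : (t * ·) ⁻¹' Iic c = Iic (c / t) := by
    ext x; simp [le_div_iff₀' ht]
  rw [measureReal_def, scaledMeasure, Measure.smul_apply,
    (measurableEmbedding_mulLeft₀ ht.ne').map_apply, hpre, smul_eq_mul, ENNReal.toReal_mul,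
    ENNReal.toReal_ofReal (rpow_nonneg ht.le _), measureReal_def]

lemma tendsto_integral_exp_neg_mul_scaledMeasure
    (hlaplace : Tendsto (fun t => t ^ α * ∫ x, exp (-t * x) ∂μ) (𝓝[>] 0) (𝓝 1))
    {s : ℝ} (hs : 0 < s) :
    Tendsto (fun t => ∫ x, exp (-s * x) ∂scaledMeasure μ α t) (𝓝[>] 0) (𝓝 (s ^ (-α))) := by
  have hmul : Tendsto (s * ·) (𝓝[>] (0 : ℝ)) (𝓝[>] 0) :=
    tendsto_nhdsWithin_of_tendsto_nhds_of_eventually_within _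
      (((continuous_const_mul s).tendsto' 0 0 (mul_zero s)).mono_left nhdsWithin_le_nhds)
      (eventually_mem_nhdsWithin.mono fun t ht => mul_pos hs ht)
  have := (hlaplace.comp hmul).const_mul (s ^ (-α))
  rw [mul_one] at this
  refine this.congr' ?_
  filter_upwards [self_mem_nhdsWithin] with t ht
  rw [Function.comp_apply, integral_scaledMeasure ht, mul_rpow hs.le (le_of_lt ht), ← mul_assoc,
    ← mul_assoc, ← rpow_add hs, neg_add_cancel, rpow_zero, one_mul]
  simp_rw [neg_mul, mul_assoc]

end ScaledMeasure

theorem tendsto_measureReal_Iic_mul_rpow {μ : Measure ℝ} {α : ℝ} (hα : 0 ≤ α)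
    (hμ : ∀ᵐ x ∂μ, 0 ≤ x) (hint : ∀ t, 0 < t → Integrable (fun x => exp (-t * x)) μ)
    (hlaplace : Tendsto (fun t => t ^ α * ∫ x, exp (-t * x) ∂μ) (𝓝[>] 0) (𝓝 1)) :
    Tendsto (fun l => μ.real (Iic l) * l ^ (-α)) atTop (𝓝 (1 / Gamma (α + 1))) := by
  have hm : ∀ᶠ t in 𝓝[>] 0, ∀ᵐ x ∂scaledMeasure μ α t, 0 ≤ x :=
    eventually_mem_nhdsWithin.mono fun t ht => ae_nonneg_scaledMeasure hμ ht
  have hmexp : ∀ᶠ t in 𝓝[>] 0, Integrable (fun x => exp (-x)) (scaledMeasure μ α t) :=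
    eventually_mem_nhdsWithin.mono fun t ht =>
      (integrable_scaledMeasure_iff ht).2 (by simpa only [neg_mul] using hint t ht)
  have hνexp : Integrable (fun x => exp (-x)) (karamataMeasure α) := by
    simpa only [neg_mul, one_mul] using integrable_exp_neg_mul_karamataMeasure hα one_pos
  have hlim (k : ℕ) : Tendsto (fun t => ∫ x, exp (-(k + 1) * x) ∂scaledMeasure μ α t) (𝓝[>] 0)
      (𝓝 (∫ x, exp (-(k + 1) * x) ∂karamataMeasure α)) := by
    rw [integral_exp_neg_mul_karamataMeasure hα (by positivity)]
    exact tendsto_integral_exp_neg_mul_scaledMeasure hlaplace (by positivity)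
  have hdist := tendsto_measureReal_Iic
    (hmexp.mono fun _ => measure_Iic_ne_top_of_integrable_exp_neg)
    (measure_Iic_ne_top_of_integrable_exp_neg hνexp)
    (fun _ _ => tendsto_integral_cutoff hm hmexp (ae_nonneg_karamataMeasure α) hνexp hlim)
    (continuousAt_measureReal_Iic_karamataMeasure hα one_pos)
  rw [measureReal_Iic_karamataMeasure hα one_pos, one_rpow] at hdist
  refine (hdist.comp tendsto_inv_atTop_nhdsGT_zero).congr' ?_
  filter_upwards [eventually_gt_atTop 0] with l hl
  rw [Function.comp_apply, measureReal_Iic_scaledMeasure (inv_pos.2 hl), one_div, inv_inv,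
    inv_rpow hl.le, rpow_neg hl.le, mul_comm]

end Karamata

namespace StieltjesFunction

variable (μ : StieltjesFunction ℝ)

lemma measure_Iic_of_eq_zero (hzero : ∀ x ≤ 0, μ x = 0) (x : ℝ) :
    μ.measure (Iic x) = ENNReal.ofReal (μ x) := by
  have hbot : Tendsto μ atBot (𝓝 0) :=
    tendsto_const_nhds.congr' ((eventually_le_atBot 0).mono fun x hx => (hzero x hx).symm)
  rw [μ.measure_Iic hbot, sub_zero]

lemma ae_nonneg_measure (hzero : ∀ x ≤ 0, μ x = 0) : ∀ᵐ x ∂μ.measure, 0 ≤ x := by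
  refine measure_mono_null (fun x (hx : ¬ 0 ≤ x) => mem_Iic.2 (not_le.1 hx).le) ?_
  rw [μ.measure_Iic_of_eq_zero hzero, hzero 0 le_rfl, ENNReal.ofReal_zero]

lemma measureReal_Iic_of_eq_zero (hzero : ∀ x ≤ 0, μ x = 0) {x : ℝ} (hx : 0 ≤ x) :
    μ.measure.real (Iic x) = μ x := by
  rw [measureReal_def, μ.measure_Iic_of_eq_zero hzero,
    ENNReal.toReal_ofReal ((hzero 0 le_rfl).symm.le.trans (μ.mono hx))]

end StieltjesFunction

theorem karamata_tauberian_general (μ : StieltjesFunction ℝ) (α : ℝ) (hα : 0 ≤ α)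
    (hzero : ∀ x : ℝ, x ≤ 0 → μ x = 0)
    (hint : ∀ t : ℝ, 0 < t → Integrable (fun x : ℝ => Real.exp (-t * x)) μ.measure)
    (hlaplace : Tendsto (fun t : ℝ => t ^ α * ∫ x : ℝ, Real.exp (-t * x) ∂μ.measure)
      (nhdsWithin 0 (Set.Ioi 0)) (nhds 1)) :
    Tendsto (fun l : ℝ => μ l * l ^ (-α)) atTop (nhds (1 / Real.Gamma (α + 1))) := by
  refine (Karamata.tendsto_measureReal_Iic_mul_rpow hα (μ.ae_nonneg_measure hzero) hint
    hlaplace).congr' ?_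
  filter_upwards [eventually_ge_atTop 0] with l hl
  rw [μ.measureReal_Iic_of_eq_zero hzero hl]

/-- **Karamata's Tauberian theorem.**
Let `μ : [0,∞) → ℝ` be non-negative, non-decreasing and right-continuous with `μ(0) = 0`
(modeled as a Stieltjes function on `ℝ` vanishing on `(-∞,0]`), and let `α ≥ 0`. If the
Laplace transform `μ̂(t) = ∫₀^∞ e^{-tλ} dμ(λ)` is finite for every `t > 0` and
`t^α μ̂(t) → 1` as `t → 0⁺`, then `μ(λ) λ^{-α} → 1/Γ(α+1)` as `λ → ∞`. -/
theorem karamata_tauberian (μ : StieltjesFunction ℝ) (α : ℝ) (hα : 0 ≤ α)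
    (hzero : ∀ x : ℝ, x ≤ 0 → μ x = 0)
    (hnonneg : ∀ x : ℝ, 0 ≤ μ x)
    (hint : ∀ t : ℝ, 0 < t → Integrable (fun x : ℝ => Real.exp (-t * x)) μ.measure)
    (hlaplace : Tendsto (fun t : ℝ => t ^ α * ∫ x : ℝ, Real.exp (-t * x) ∂μ.measure)
      (nhdsWithin 0 (Set.Ioi 0)) (nhds 1)) :
    Tendsto (fun l : ℝ => μ l * l ^ (-α)) atTop (nhds (1 / Real.Gamma (α + 1))) :=
  karamata_tauberian_general μ α hα hzero hint hlaplace
end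

section
/- Let υ : (0,∞) → (0,∞) be a slowly varying function of class C¹ such that λ ↦ λ^a υ′(λ) is monotone for some a ≥ 0. Then λ υ′(λ)/υ(λ) → 0 as λ → ∞. -/
/-!
Put `g(x) = x^a υ'(x)` and suppose `g` is monotone. By the mean value theorem on `[l, 2l]` and on
`[l/2, l]`, `l υ'(l)` is compared with `υ'` at some point `c ∈ (l, 2l)` resp. `d ∈ (l/2, l)`, and
monotonicity of `g` together with `c^a ≤ (2l)^a`, `d^a ≤ l^a` gives
`|l υ'(l)| ≤ 2^a |υ(2l) - υ(l)| + 2 |υ(l/2) - υ(l)|`.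
Dividing by `υ(l)`, slow variation at the scales `2` and `1/2` forces the bound to `0`.
The antitone case is the monotone one for `-υ`.
-/

open Filter Set

namespace SlowlyVarying

variable {υ : ℝ → ℝ} {a l : ℝ}

theorem exists_mul_deriv_eq_sub (hυ : DifferentiableOn ℝ υ (Ioi 0)) {x y : ℝ} (hx : 0 < x)
    (hxy : x < y) : ∃ c ∈ Ioo x y, (y - x) * deriv υ c = υ y - υ x := by
  obtain ⟨c, hc, hslope⟩ := exists_deriv_eq_slope υ hxy
    (hυ.continuousOn.mono fun z hz => hx.trans_le hz.1)
    (hυ.mono fun z hz => hx.trans hz.1)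
  refine ⟨c, hc, ?_⟩
  rw [hslope]
  field_simp [(sub_pos.2 hxy).ne']

section Monotone

variable (hυ : DifferentiableOn ℝ υ (Ioi 0)) (ha : 0 ≤ a)
  (hg : MonotoneOn (fun x => x ^ a * deriv υ x) (Ioi 0))
include hυ ha hg

theorem mul_deriv_le_of_monotoneOn (hl : 0 < l) (hd : 0 ≤ deriv υ l) :
    l * deriv υ l ≤ 2 ^ a * (υ (2 * l) - υ l) := by
  obtain ⟨c, hc, hmvt⟩ := exists_mul_deriv_eq_sub hυ hl (by linarith : l < 2 * l)
  have hc0 : 0 < c := hl.trans hc.1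
  have hgc : l ^ a * deriv υ l ≤ c ^ a * deriv υ c := hg hl hc0 hc.1.le
  have hdc : 0 ≤ deriv υ c :=
    nonneg_of_mul_nonneg_right ((mul_nonneg (by positivity) hd).trans hgc) (by positivity)
  have hpow : c ^ a ≤ 2 ^ a * l ^ a := by
    rw [← Real.mul_rpow zero_le_two hl.le]
    exact Real.rpow_le_rpow hc0.le hc.2.le ha
  have hderiv : deriv υ l ≤ 2 ^ a * deriv υ c := by
    refine le_of_mul_le_mul_left ?_ (Real.rpow_pos_of_pos hl a)
    calc l ^ a * deriv υ l ≤ c ^ a * deriv υ c := hgc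
      _ ≤ 2 ^ a * l ^ a * deriv υ c := mul_le_mul_of_nonneg_right hpow hdc
      _ = l ^ a * (2 ^ a * deriv υ c) := by ring
  calc l * deriv υ l ≤ l * (2 ^ a * deriv υ c) := mul_le_mul_of_nonneg_left hderiv hl.le
    _ = 2 ^ a * (υ (2 * l) - υ l) := by rw [← hmvt]; ring

theorem le_mul_deriv_of_monotoneOn (hl : 0 < l) (hd : deriv υ l ≤ 0) :
    2 * (υ l - υ (l / 2)) ≤ l * deriv υ l := by
  obtain ⟨c, hc, hmvt⟩ := exists_mul_deriv_eq_sub hυ (half_pos hl) (half_lt_self hl)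
  have hc0 : 0 < c := (half_pos hl).trans hc.1
  have hgc : c ^ a * deriv υ c ≤ l ^ a * deriv υ l := hg hc0 hl hc.2.le
  have hdc : deriv υ c ≤ 0 :=
    nonpos_of_mul_nonpos_right (hgc.trans (mul_nonpos_of_nonneg_of_nonpos (by positivity) hd))
      (by positivity)
  have hpow : c ^ a ≤ l ^ a := Real.rpow_le_rpow hc0.le hc.2.le ha
  have hderiv : deriv υ c ≤ deriv υ l := by
    refine le_of_mul_le_mul_left ?_ (Real.rpow_pos_of_pos hl a)
    calc l ^ a * deriv υ c ≤ c ^ a * deriv υ c := mul_le_mul_of_nonpos_right hpow hdc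
      _ ≤ l ^ a * deriv υ l := hgc
  calc 2 * (υ l - υ (l / 2)) = l * deriv υ c := by rw [← hmvt]; ring
    _ ≤ l * deriv υ l := mul_le_mul_of_nonneg_left hderiv hl.le

theorem abs_mul_deriv_le_of_monotoneOn (hl : 0 < l) :
    |l * deriv υ l| ≤ 2 ^ a * |υ (2 * l) - υ l| + 2 * |υ (l / 2) - υ l| := by
  have h2a : (0 : ℝ) ≤ 2 ^ a := by positivity
  rcases le_total 0 (deriv υ l) with hd | hd
  · have := mul_deriv_le_of_monotoneOn hυ ha hg hl hd
    rw [abs_of_nonneg (mul_nonneg hl.le hd)]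
    nlinarith [le_abs_self (υ (2 * l) - υ l), abs_nonneg (υ (l / 2) - υ l)]
  · have := le_mul_deriv_of_monotoneOn hυ ha hg hl hd
    rw [abs_of_nonpos (mul_nonpos_of_nonneg_of_nonpos hl.le hd)]
    nlinarith [le_abs_self (υ (l / 2) - υ l), abs_nonneg (υ (2 * l) - υ l)]

end Monotone

theorem abs_mul_deriv_le_of_antitoneOn (hυ : DifferentiableOn ℝ υ (Ioi 0)) (ha : 0 ≤ a)
    (hg : AntitoneOn (fun x => x ^ a * deriv υ x) (Ioi 0)) (hl : 0 < l) :
    |l * deriv υ l| ≤ 2 ^ a * |υ (2 * l) - υ l| + 2 * |υ (l / 2) - υ l| := by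
  have hg' : MonotoneOn (fun x => x ^ a * deriv (-υ) x) (Ioi 0) := by
    simpa only [deriv.neg, mul_neg] using hg.neg
  have h := abs_mul_deriv_le_of_monotoneOn hυ.neg ha hg' hl
  simp only [deriv.neg, Pi.neg_apply, mul_neg, abs_neg, ← neg_add'] at h
  exact h

end SlowlyVarying

open SlowlyVarying

/-- Let `υ : (0,∞) → (0,∞)` be a slowly varying function of class `C¹` such that
`λ ↦ λ^a υ′(λ)` is monotone for some `a ≥ 0`. Then `λ υ′(λ)/υ(λ) → 0` as `λ → ∞`. -/
theorem slowly_varying_deriv_ratio (υ : ℝ → ℝ)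
    (hpos : ∀ l : ℝ, 0 < l → 0 < υ l)
    (hC1 : ContDiffOn ℝ 1 υ (Set.Ioi 0))
    (hslow : ∀ a : ℝ, 0 < a →
      Tendsto (fun l : ℝ => υ (a * l) / υ l) atTop (nhds 1))
    (hmono : ∃ a : ℝ, 0 ≤ a ∧
      (MonotoneOn (fun l : ℝ => l ^ a * deriv υ l) (Set.Ioi 0) ∨
       AntitoneOn (fun l : ℝ => l ^ a * deriv υ l) (Set.Ioi 0))) :
    Tendsto (fun l : ℝ => l * deriv υ l / υ l) atTop (nhds 0) := by
  obtain ⟨a, ha, hg⟩ := hmono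
  have hυ : DifferentiableOn ℝ υ (Ioi 0) := hC1.differentiableOn one_ne_zero
  have hbound : ∀ l > 0, ‖l * deriv υ l / υ l‖ ≤
      2 ^ a * |υ (2 * l) / υ l - 1| + 2 * |υ (2⁻¹ * l) / υ l - 1| := by
    intro l hl
    have hυl := hpos l hl
    have h := hg.elim (abs_mul_deriv_le_of_monotoneOn hυ ha · hl)
      (abs_mul_deriv_le_of_antitoneOn hυ ha · hl)
    have hrel : ∀ x, |x / υ l - 1| = |x - υ l| / υ l := fun x => by
      rw [div_sub_one hυl.ne', abs_div, abs_of_pos hυl]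
    rw [Real.norm_eq_abs, abs_div, abs_of_pos hυl, inv_mul_eq_div, hrel, hrel]
    calc |l * deriv υ l| / υ l
        ≤ (2 ^ a * |υ (2 * l) - υ l| + 2 * |υ (l / 2) - υ l|) / υ l := by gcongr
      _ = _ := by ring
  have hlim : Tendsto (fun l => 2 ^ a * |υ (2 * l) / υ l - 1| + 2 * |υ (2⁻¹ * l) / υ l - 1|)
      atTop (nhds 0) := by
    simpa using ((((hslow 2 two_pos).sub_const 1).abs.const_mul (2 ^ a)).add
      (((hslow 2⁻¹ (by norm_num)).sub_const 1).abs.const_mul 2))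
  exact squeeze_zero_norm' (eventually_gt_atTop 0 |>.mono hbound) hlim
end
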